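/- arXiv:2111.06225 — 6 statements merged into one kernel-verified Lean document; each statement's English description precedes it below -/
import Mathlib

section
/- Every finite undirected multigraph G (possibly with self-loops) admits an orientation of its edges such that every vertex v has in-degree at least ⌊d(v)/2⌋, where d(v) denotes the degree of v (self-loops counted once). -/
/-!
Give every vertex `v` exactly `⌊d(v)/2⌋` tokens and ask each token to choose a distinct edge
through its vertex; an edge chosen by a token of `v` is then oriented towards `v`. By Hall's
theorem the tokens can choose if every set `S` of vertices carries at most as many tokens as
there are edges meeting `S`, and this holds because every edge has at most two ends in `S`:
`∑_{v ∈ S} d(v) ≤ 2 · #{edges meeting S}`.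
-/

open Finset

section Orientation

variable {V E : Type*} (ends : E → Sym2 V)

theorem exists_orientation_of_forall_mem (head : E → V) (hhead : ∀ e, head e ∈ ends e) :
    ∃ o : E → V × V, (∀ e, s((o e).1, (o e).2) = ends e) ∧ ∀ e, (o e).2 = head e :=
  ⟨fun e => (Sym2.Mem.other (hhead e), head e),
    fun e => by rw [Sym2.eq_swap]; exact Sym2.other_spec (hhead e), fun _ => rfl⟩

variable [Fintype E] [DecidableEq V]

theorem exists_head_of_sum_le_card_incident (k : V → ℕ)
    (hk : ∀ S : Finset V, ∑ v ∈ S, k v ≤ #{e | ∃ v ∈ S, v ∈ ends e}) :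
    ∃ head : E → V, (∀ e, head e ∈ ends e) ∧ ∀ v, k v ≤ #{e | head e = v} := by
  classical
  let t : (Σ v, Fin (k v)) → Finset E := fun x => {e | x.1 ∈ ends e}
  have hall : ∀ s : Finset (Σ v, Fin (k v)), #s ≤ #(s.biUnion t) := fun s =>
    calc #s ≤ #((s.image Sigma.fst).sigma fun v => (univ : Finset (Fin (k v)))) :=
          card_le_card fun x hx => by simpa using ⟨x.2, hx⟩
      _ = ∑ v ∈ s.image Sigma.fst, k v := by simp [card_sigma]
      _ ≤ #{e | ∃ v ∈ s.image Sigma.fst, v ∈ ends e} := hk _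
      _ ≤ #(s.biUnion t) := card_le_card fun e he => by
          simp only [mem_filter, mem_univ, true_and, mem_image] at he
          obtain ⟨v, ⟨x, hx, rfl⟩, hv⟩ := he
          exact mem_biUnion.mpr ⟨x, hx, by simpa [t] using hv⟩
  obtain ⟨f, hf, hft⟩ := (all_card_le_biUnion_card_iff_exists_injective t).mp hall
  let head : E → V := Function.extend f Sigma.fst fun e => (ends e).out.1
  refine ⟨head, fun e => ?_, fun v => ?_⟩
  · by_cases he : ∃ x, f x = e
    · obtain ⟨x, rfl⟩ := he
      simpa [head, hf.extend_apply, t] using hft x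
    · simpa [head, Function.extend_apply' _ _ _ he] using Sym2.out_fst_mem (ends e)
  · calc k v = #(univ : Finset (Fin (k v))) := by simp
      _ ≤ #{e | head e = v} :=
        card_le_card_of_injOn (fun i => f ⟨v, i⟩)
          (fun i _ => by simp [head, hf.extend_apply])
          (fun i _ j _ hij => by simpa using hf hij)

theorem card_filter_mem_sym2_le_two (S : Finset V) (z : Sym2 V) : #{v ∈ S | v ∈ z} ≤ 2 :=
  calc #{v ∈ S | v ∈ z} ≤ #z.toFinset := card_le_card fun v hv => by simp_all
    _ ≤ 2 := by rw [Sym2.card_toFinset]; split <;> omega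

theorem sum_degree_le_two_mul_card_incident (S : Finset V) :
    ∑ v ∈ S, #{e | v ∈ ends e} ≤ 2 * #{e | ∃ v ∈ S, v ∈ ends e} := by
  set N : Finset E := {e | ∃ v ∈ S, v ∈ ends e}
  calc ∑ v ∈ S, #{e | v ∈ ends e} = ∑ v ∈ S, #(N.bipartiteAbove (fun v e => v ∈ ends e) v) :=
        sum_congr rfl fun v hv => congrArg card <| by
          ext e; simpa [bipartiteAbove, N] using fun he => ⟨v, hv, he⟩
    _ = ∑ e ∈ N, #(S.bipartiteBelow (fun v e => v ∈ ends e) e) :=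
        sum_card_bipartiteAbove_eq_sum_card_bipartiteBelow _
    _ ≤ ∑ _e ∈ N, 2 := sum_le_sum fun e _ => card_filter_mem_sym2_le_two S (ends e)
    _ = 2 * #N := by rw [sum_const, smul_eq_mul, mul_comm]

theorem sum_half_degree_le_card_incident (S : Finset V) :
    ∑ v ∈ S, #{e | v ∈ ends e} / 2 ≤ #{e | ∃ v ∈ S, v ∈ ends e} := by
  have hdeg := sum_degree_le_two_mul_card_incident ends S
  have hhalf : 2 * ∑ v ∈ S, #{e | v ∈ ends e} / 2 ≤ ∑ v ∈ S, #{e | v ∈ ends e} := by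
    rw [mul_sum]
    exact sum_le_sum fun v _ => Nat.mul_div_le _ _
  omega

end Orientation

theorem stmt6_general {V E : Type*} [Fintype E] [DecidableEq V]
    (ends : E → Sym2 V) :
    ∃ o : E → V × V,
      (∀ e : E, s((o e).1, (o e).2) = ends e) ∧
      ∀ v : V,
        (Finset.univ.filter (fun e : E => v ∈ ends e)).card / 2 ≤
          (Finset.univ.filter (fun e : E => (o e).2 = v)).card := by
  obtain ⟨head, hmem, hdeg⟩ := exists_head_of_sum_le_card_incident ends
    (fun v => #{e | v ∈ ends e} / 2) (sum_half_degree_le_card_incident ends)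
  obtain ⟨o, hends, hhead⟩ := exists_orientation_of_forall_mem ends head hmem
  exact ⟨o, hends, fun v => by simpa only [hhead] using hdeg v⟩

/-- Hakimi's orientation theorem: every finite multigraph (with self-loops) admits an
orientation where each vertex has in-degree at least ⌊d(v)/2⌋ (self-loops counted once
in the degree, and a self-loop contributes one to the in-degree of its vertex). -/
theorem stmt6 {V E : Type*} [Fintype V] [Fintype E] [DecidableEq V]
    (ends : E → Sym2 V) :
    ∃ o : E → V × V,
      (∀ e : E, s((o e).1, (o e).2) = ends e) ∧
      ∀ v : V,
        (Finset.univ.filter (fun e : E => v ∈ ends e)).card / 2 ≤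
          (Finset.univ.filter (fun e : E => (o e).2 = v)).card :=
  stmt6_general ends
end

section
/- Consider n ≥ 2 jobs identified with the vertices of the complete graph K_n, and machines identified with its edges; each job j can only be processed by the set S_j of all n−1 edges incident to j, with processing time 1 on that set. In any assignment where each job j is assigned to S_j, the load of every machine is exactly 2. However, in any feasible schedule in which each job j is processed non-preemptively in unison on S_j, no two distinct jobs can have overlapping processing intervals, and hence the makespan of any such schedule is at least n. -/
/-- The clique instance K_n: jobs are vertices, machines are edges; each job needs all its
incident edges with processing time 1. Every machine has load exactly 2 in the assignment,
but any feasible schedule has makespan at least n. -/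
theorem stmt13 (n : ℕ) (hn : 2 ≤ n) :
    (∀ e : Sym2 (Fin n), ¬ e.IsDiag →
      (Finset.univ.filter (fun j : Fin n => j ∈ e)).card = 2) ∧
    (∀ t : Fin n → ℝ,
      (∀ j : Fin n, 0 ≤ t j) →
      (∀ j j' : Fin n, j ≠ j' →
        (∃ e : Sym2 (Fin n), ¬ e.IsDiag ∧ j ∈ e ∧ j' ∈ e) →
        t j + 1 ≤ t j' ∨ t j' + 1 ≤ t j) →
      ∃ j : Fin n, (n : ℝ) ≤ t j + 1) := by
  constructor
  · intro e
    induction e using Sym2.inductionOn with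
    | hf a b =>
      intro hd
      rw [Sym2.mk_isDiag_iff] at hd
      have : Finset.univ.filter (fun j : Fin n => j ∈ s(a, b)) = {a, b} := by
        ext j
        simp [Sym2.mem_iff]
      rw [this, Finset.card_insert_of_notMem (by simpa using hd), Finset.card_singleton]
  · intro t ht0 hsep
    -- sort the times
    set σ := Tuple.sort t with hσ
    have hmono : Monotone (t ∘ σ) := Tuple.monotone_sort t
    have key : ∀ k : ℕ, ∀ h : k < n, (k : ℝ) ≤ t (σ ⟨k, h⟩) := by
      intro k
      induction k with
      | zero => intro h; simpa using ht0 _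
      | succ k ih =>
        intro h
        have hk : k < n := Nat.lt_of_succ_lt h
        have hne : σ ⟨k, hk⟩ ≠ σ ⟨k + 1, h⟩ := by
          intro hcon
          have := σ.injective hcon
          simp [Fin.ext_iff] at this
        have hedge : ∃ e : Sym2 (Fin n), ¬ e.IsDiag ∧ σ ⟨k, hk⟩ ∈ e ∧ σ ⟨k + 1, h⟩ ∈ e := by
          refine ⟨s(σ ⟨k, hk⟩, σ ⟨k + 1, h⟩), ?_, ?_, ?_⟩
          · rw [Sym2.mk_isDiag_iff]; exact hne
          · simp
          · simp
        have hle : t (σ ⟨k, hk⟩) ≤ t (σ ⟨k + 1, h⟩) := by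
          have : (⟨k, hk⟩ : Fin n) ≤ ⟨k + 1, h⟩ := by simp [Fin.le_def]
          exact hmono this
        rcases hsep _ _ hne hedge with h1 | h1
        · have := ih hk
          push_cast
          linarith
        · linarith
    have hlast : n - 1 < n := Nat.sub_lt (by omega) one_pos
    refine ⟨σ ⟨n - 1, hlast⟩, ?_⟩
    have := key (n - 1) hlast
    have hcast : ((n - 1 : ℕ) : ℝ) = (n : ℝ) - 1 := by
      have : 1 ≤ n := by omega
      push_cast [this]; ring
    linarith [hcast ▸ this]
end

section
/- Let J, M be finite sets and suppose there is an assignment S : J → 2^M \ {∅} and a partition J = J_1 ∪ J_2 such that: (i) |S_j| = 1 for all j ∈ J_1 and ∑_{j ∈ J_1 : i ∈ S_j} f_j(S_j) ≤ 2C for all i ∈ M; (ii) the sets S_j for j ∈ J_2 are pairwise disjoint and f_j(S_j) ≤ 2C for all j ∈ J_2. Then the assignment S is well-structured (each machine i belongs to at most one set S_j with |S_j| > 1), and the schedule that starts every job j ∈ J_2 at time 0 and processes the jobs of J_1 sequentially afterwards on their single machines has makespan at most 4C. -/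
/-- An assignment split into singleton jobs (J₁) with machine loads ≤ 2C and
pairwise-disjoint parallel jobs (J₂) with processing times ≤ 2C is well-structured and
can be scheduled, J₂ first at time 0, with makespan at most 4C. -/
theorem stmt14 {J M : Type*} [Fintype J] [Fintype M] [DecidableEq J] [DecidableEq M]
    (f : J → Finset M → ℝ) (hf : ∀ j S, 0 ≤ f j S)
    (S : J → Finset M) (hSne : ∀ j, (S j).Nonempty)
    (C : ℝ) (J1 J2 : Finset J)
    (hcover : J1 ∪ J2 = Finset.univ) (hJdisj : Disjoint J1 J2)
    (h1 : ∀ j ∈ J1, (S j).card = 1)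
    (h1load : ∀ i : M, ∑ j ∈ J1.filter (fun j => i ∈ S j), f j (S j) ≤ 2 * C)
    (h2disj : ∀ j ∈ J2, ∀ j' ∈ J2, j ≠ j' → Disjoint (S j) (S j'))
    (h2time : ∀ j ∈ J2, f j (S j) ≤ 2 * C) :
    (∀ i : M, (Finset.univ.filter (fun j : J => i ∈ S j ∧ 1 < (S j).card)).card ≤ 1) ∧
    ∃ t : J → ℝ,
      (∀ j ∈ J2, t j = 0) ∧
      (∀ j, 0 ≤ t j) ∧
      (∀ j j' : J, j ≠ j' → (S j ∩ S j').Nonempty →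
        t j + f j (S j) ≤ t j' ∨ t j' + f j' (S j') ≤ t j) ∧
      (∀ j : J, t j + f j (S j) ≤ 4 * C) := by
  classical
  -- every job is in J1 or J2
  have hmem : ∀ j : J, j ∈ J1 ∨ j ∈ J2 := by
    intro j
    have : j ∈ J1 ∪ J2 := by rw [hcover]; exact Finset.mem_univ j
    exact Finset.mem_union.mp this
  have hnot1 : ∀ j ∈ J2, j ∉ J1 := fun j hj hj1 => (Finset.disjoint_left.mp hJdisj hj1) hj
  -- C is nonnegative as soon as some machine exists
  have hCpos : ∀ _ : M, 0 ≤ C := by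
    intro i
    have h0 : 0 ≤ ∑ j ∈ J1.filter (fun j => i ∈ S j), f j (S j) :=
      Finset.sum_nonneg fun j _ => hf j (S j)
    have := h1load i
    linarith
  -- two J1 jobs sharing a machine have equal (singleton) machine sets
  have hsing : ∀ j ∈ J1, ∀ j' ∈ J1, (S j ∩ S j').Nonempty → S j = S j' := by
    intro j hj j' hj' ⟨i, hi⟩
    have hi1 : i ∈ S j := (Finset.mem_inter.mp hi).1
    have hi2 : i ∈ S j' := (Finset.mem_inter.mp hi).2
    have e1 : S j = {i} := Finset.eq_singleton_iff_unique_mem.mpr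
      ⟨hi1, fun x hx => Finset.card_le_one.mp (le_of_eq (h1 j hj)) x hx i hi1⟩
    have e2 : S j' = {i} := Finset.eq_singleton_iff_unique_mem.mpr
      ⟨hi2, fun x hx => Finset.card_le_one.mp (le_of_eq (h1 j' hj')) x hx i hi2⟩
    rw [e1, e2]
  constructor
  · -- well-structuredness
    intro i
    apply Finset.card_le_one.mpr
    intro a ha b hb
    simp only [Finset.mem_filter, Finset.mem_univ, true_and] at ha hb
    have ha2 : a ∈ J2 := by
      rcases hmem a with h | h
      · exact absurd (h1 a h) (by omega)
      · exact h
    have hb2 : b ∈ J2 := by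
      rcases hmem b with h | h
      · exact absurd (h1 b h) (by omega)
      · exact h
    by_contra hne
    exact (Finset.disjoint_left.mp (h2disj a ha2 b hb2 hne) ha.1) hb.1
  · -- the schedule
    set e := Fintype.equivFin J with he
    set t : J → ℝ := fun j =>
      if j ∈ J1 then
        2 * C + ∑ j' ∈ J1.filter (fun j' => S j' = S j ∧ e j' < e j), f j' (S j')
      else 0 with ht
    have hC' : ∀ j ∈ J1, 0 ≤ C := by
      intro j hj
      obtain ⟨i, _⟩ := hSne j
      exact hCpos i
    have htJ1 : ∀ j ∈ J1,
        t j = 2 * C + ∑ j' ∈ J1.filter (fun j' => S j' = S j ∧ e j' < e j), f j' (S j') := by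
      intro j hj; simp [ht, hj]
    refine ⟨t, ?_, ?_, ?_, ?_⟩
    · intro j hj; simp [ht, hnot1 j hj]
    · intro j
      by_cases hj : j ∈ J1
      · rw [htJ1 j hj]
        have h0 : 0 ≤ ∑ j' ∈ J1.filter (fun j' => S j' = S j ∧ e j' < e j), f j' (S j') :=
          Finset.sum_nonneg fun j' _ => hf j' (S j')
        have := hC' j hj
        linarith
      · simp [ht, hj]
    · -- no overlap
      intro j j' hne hinter
      -- key lemma: if both in J1 and e j < e j', then t j + f j ≤ t j'
      have key : ∀ a ∈ J1, ∀ b ∈ J1, S a = S b → e a < e b → t a + f a (S a) ≤ t b := by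
        intro a ha b hb hS hab
        rw [htJ1 a ha, htJ1 b hb]
        have hsub : insert a (J1.filter (fun j' => S j' = S a ∧ e j' < e a)) ⊆
            J1.filter (fun j' => S j' = S b ∧ e j' < e b) := by
          intro x hx
          rcases Finset.mem_insert.mp hx with rfl | hx
          · exact Finset.mem_filter.mpr ⟨ha, hS, hab⟩
          · obtain ⟨hx1, hx2, hx3⟩ := Finset.mem_filter.mp hx
            exact Finset.mem_filter.mpr ⟨hx1, hx2.trans hS, hx3.trans hab⟩
        have hnotmem : a ∉ J1.filter (fun j' => S j' = S a ∧ e j' < e a) := by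
          simp [lt_irrefl]
        have hsum := Finset.sum_le_sum_of_subset_of_nonneg hsub
          (f := fun x => f x (S x)) (fun x _ _ => hf x (S x))
        rw [Finset.sum_insert hnotmem] at hsum
        linarith
      rcases hmem j with hj | hj <;> rcases hmem j' with hj' | hj'
      · -- both in J1
        have hS : S j = S j' := hsing j hj j' hj' hinter
        have hne' : e j ≠ e j' := fun h => hne (e.injective h)
        rcases lt_or_gt_of_ne hne' with h | h
        · exact Or.inl (key j hj j' hj' hS h)
        · exact Or.inr (key j' hj' j hj hS.symm h)
      · -- j ∈ J1, j' ∈ J2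
        right
        have : t j' = 0 := by simp [ht, hnot1 j' hj']
        rw [this, htJ1 j hj]
        have h0 : 0 ≤ ∑ j'' ∈ J1.filter (fun j'' => S j'' = S j ∧ e j'' < e j), f j'' (S j'') :=
          Finset.sum_nonneg fun x _ => hf x (S x)
        have := h2time j' hj'
        linarith
      · -- j ∈ J2, j' ∈ J1
        left
        have : t j = 0 := by simp [ht, hnot1 j hj]
        rw [this, htJ1 j' hj']
        have h0 : 0 ≤ ∑ j'' ∈ J1.filter (fun j'' => S j'' = S j' ∧ e j'' < e j'), f j'' (S j'') :=
          Finset.sum_nonneg fun x _ => hf x (S x)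
        have := h2time j hj
        linarith
      · -- both in J2: contradiction with disjointness
        exact absurd hinter (by
          rw [Finset.not_nonempty_iff_eq_empty, ← Finset.disjoint_iff_inter_eq_empty]
          exact h2disj j hj j' hj' hne)
    · -- makespan
      intro j
      rcases hmem j with hj | hj
      · rw [htJ1 j hj]
        obtain ⟨i, hi⟩ := hSne j
        have hsub : insert j (J1.filter (fun j' => S j' = S j ∧ e j' < e j)) ⊆
            J1.filter (fun j' => i ∈ S j') := by
          intro x hx
          rcases Finset.mem_insert.mp hx with rfl | hx
          · exact Finset.mem_filter.mpr ⟨hj, hi⟩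
          · obtain ⟨hx1, hx2, _⟩ := Finset.mem_filter.mp hx
            exact Finset.mem_filter.mpr ⟨hx1, hx2 ▸ hi⟩
        have hnotmem : j ∉ J1.filter (fun j' => S j' = S j ∧ e j' < e j) := by
          simp [lt_irrefl]
        have hsum := Finset.sum_le_sum_of_subset_of_nonneg hsub
          (f := fun x => f x (S x)) (fun x _ _ => hf x (S x))
        rw [Finset.sum_insert hnotmem] at hsum
        have := h1load i
        linarith
      · have ht0 : t j = 0 := by simp [ht, hnot1 j hj]
        rw [ht0]
        obtain ⟨i, _⟩ := hSne j
        have hC := hCpos i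
        have := h2time j hj
        linarith
end

section
/- Let S be an assignment with maximum machine load at most C, where each job j is assigned to S_j with f_j(S_j) = q_j / r_j(S_j) for a matroid rank function r_j and quota q_j > 0, and where without loss of generality S_j is independent in the matroid 𝓕_j (so r_j(S_j) = |S_j|). Define t_j := ⌈q_j / C⌉. If t_j ≥ 2, then f_j(S_j) ≥ (C/2)·(t_j/|S_j|), and consequently for any machine i, ∑_{j : t_j ≥ 2, i ∈ S_j} t_j / |S_j| ≤ 2. -/
/-! If `t = ⌈q / C⌉ ≥ 2` then `q > (t - 1) C ≥ (t / 2) C`, so `t / |S_j| ≤ (2 / C) f_j(S_j)`.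
Summing over the jobs on a machine, whose load is at most `C`, gives the bound `2`. -/

open Finset

section FloorRing

variable {α : Type*} [Field α] [LinearOrder α] [IsStrictOrderedRing α] [FloorRing α]

lemma ceil_div_two_le_of_two_le_ceil {x : α} (h : 2 ≤ ⌈x⌉) : (⌈x⌉ : α) / 2 ≤ x := by
  have h2 : (2 : α) ≤ ⌈x⌉ := by exact_mod_cast h
  linarith [Int.ceil_lt_add_one x]

lemma half_mul_ceil_div_le {C q : α} (hC : 0 < C) (h : 2 ≤ ⌈q / C⌉) :
    C / 2 * ⌈q / C⌉ ≤ q :=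
  calc C / 2 * ⌈q / C⌉ = C * (⌈q / C⌉ / 2) := by ring
    _ ≤ C * (q / C) := mul_le_mul_of_nonneg_left (ceil_div_two_le_of_two_le_ceil h) hC.le
    _ = q := mul_div_cancel₀ q hC.ne'

end FloorRing

theorem stmt15_general {J M : Type*} [Fintype J] [DecidableEq M]
    (C : ℝ) (hC : 0 < C)
    (q : J → ℝ) (hq : ∀ j, 0 < q j)
    (S : J → Finset M)
    (hload : ∀ i : M,
      ∑ j ∈ Finset.univ.filter (fun j => i ∈ S j), q j / ((S j).card : ℝ) ≤ C) :
    (∀ j : J, 2 ≤ ⌈q j / C⌉ →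
      (C / 2) * ((⌈q j / C⌉ : ℝ) / ((S j).card : ℝ)) ≤ q j / ((S j).card : ℝ)) ∧
    (∀ i : M,
      ∑ j ∈ Finset.univ.filter (fun j => 2 ≤ ⌈q j / C⌉ ∧ i ∈ S j),
        (⌈q j / C⌉ : ℝ) / ((S j).card : ℝ) ≤ 2) := by
  have key : ∀ j : J, 2 ≤ ⌈q j / C⌉ →
      C / 2 * ((⌈q j / C⌉ : ℝ) / (S j).card) ≤ q j / (S j).card := fun j hj => by
    rw [mul_div_assoc']
    exact div_le_div_of_nonneg_right (half_mul_ceil_div_le hC hj) (Nat.cast_nonneg _)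
  refine ⟨key, fun i => ?_⟩
  calc _ ≤ ∑ j ∈ univ.filter (fun j => 2 ≤ ⌈q j / C⌉ ∧ i ∈ S j),
          2 / C * (q j / (S j).card) := by
        refine sum_le_sum fun j hj => ?_
        calc (⌈q j / C⌉ : ℝ) / (S j).card
            = 2 / C * (C / 2 * ((⌈q j / C⌉ : ℝ) / (S j).card)) := by field_simp
          _ ≤ 2 / C * (q j / (S j).card) := by gcongr; exact key j (mem_filter.mp hj).2.1
    _ ≤ ∑ j ∈ univ.filter (fun j => i ∈ S j), 2 / C * (q j / (S j).card) :=
        sum_le_sum_of_subset_of_nonneg (monotone_filter_right _ fun _ _ => And.right)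
          fun j _ _ => mul_nonneg (by positivity) (div_nonneg (hq j).le (Nat.cast_nonneg _))
    _ = 2 / C * ∑ j ∈ univ.filter (fun j => i ∈ S j), q j / (S j).card := (mul_sum _ _ _).symm
    _ ≤ 2 / C * C := by gcongr; exact hload i
    _ = 2 := div_mul_cancel₀ 2 hC.ne'

/-- For matroid-rank processing speeds with S_j independent (so r_j(S_j) = |S_j| and
f_j(S_j) = q_j/|S_j|), with t_j = ⌈q_j/C⌉: jobs with t_j ≥ 2 satisfy
f_j(S_j) ≥ (C/2)·(t_j/|S_j|), and hence ∑_{j : t_j ≥ 2, i ∈ S_j} t_j/|S_j| ≤ 2. -/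
theorem stmt15 {J M : Type*} [Fintype J] [Fintype M] [DecidableEq M]
    (C : ℝ) (hC : 0 < C)
    (q : J → ℝ) (hq : ∀ j, 0 < q j)
    (S : J → Finset M) (hSne : ∀ j, (S j).Nonempty)
    (hload : ∀ i : M,
      ∑ j ∈ Finset.univ.filter (fun j => i ∈ S j), q j / ((S j).card : ℝ) ≤ C) :
    (∀ j : J, 2 ≤ ⌈q j / C⌉ →
      (C / 2) * ((⌈q j / C⌉ : ℝ) / ((S j).card : ℝ)) ≤ q j / ((S j).card : ℝ)) ∧
    (∀ i : M,
      ∑ j ∈ Finset.univ.filter (fun j => 2 ≤ ⌈q j / C⌉ ∧ i ∈ S j),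
        (⌈q j / C⌉ : ℝ) / ((S j).card : ℝ) ≤ 2) :=
  stmt15_general C hC q hq S hload
end

section
/- Let G(x') be the bipartite support graph of an extreme point solution x' of the linear program {∑_i x_{ij} ≥ 1 ∀j, ∑_j c_{ij} x_{ij} ≤ C ∀i, x ≥ 0} (with c_{ij} > 0), i.e., the bipartite graph on J ∪ M with an edge {i,j} whenever x'_{ij} > 0. Then every connected component of G(x') contains at most one cycle (G(x') is a pseudoforest), and hence G(x') admits an orientation in which every node has in-degree at most 1. -/
namespace Stmt16Aux

open Finset

variable {J M : Type*} [Fintype J] [Fintype M]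

open Classical in
/-- The column of the LP constraint matrix corresponding to a support edge. -/
noncomputable def vec (c x' : M → J → ℝ) (p : {p : M × J // 0 < x' p.1 p.2}) : J ⊕ M → ℝ :=
  Sum.elim (fun j => if j = p.1.2 then (1:ℝ) else 0)
           (fun i => if i = p.1.1 then c p.1.1 p.1.2 else 0)

/-- At an extreme point, the columns of the support edges are linearly independent. -/
theorem key (c : M → J → ℝ) (C : ℝ) (x' : M → J → ℝ)
    (hfeas : (∀ j, 1 ≤ ∑ i, x' i j) ∧ (∀ i, ∑ j, c i j * x' i j ≤ C) ∧
      ∀ i j, 0 ≤ x' i j)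
    (hext : ∀ y z : M → J → ℝ,
      ((∀ j, 1 ≤ ∑ i, y i j) ∧ (∀ i, ∑ j, c i j * y i j ≤ C) ∧ ∀ i j, 0 ≤ y i j) →
      ((∀ j, 1 ≤ ∑ i, z i j) ∧ (∀ i, ∑ j, c i j * z i j ≤ C) ∧ ∀ i j, 0 ≤ z i j) →
      (∀ i j, x' i j = (y i j + z i j) / 2) → y = z) :
    LinearIndependent ℝ (vec c x') := by
  classical
  rw [Fintype.linearIndependent_iff]
  intro g hg p0
  set d : M → J → ℝ := fun i j => if h : 0 < x' i j then g ⟨(i,j), h⟩ else 0 with hd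
  have hd0 : ∀ i j, ¬ 0 < x' i j → d i j = 0 := by
    intro i j h; simp [hd, h]
  have hsum : ∀ u : J ⊕ M, (∑ p, g p • vec c x' p) u = 0 := by
    intro u; rw [hg]; rfl
  have hcol : ∀ j, ∑ i, d i j = 0 := by
    intro j
    have h1 : (∑ p, g p • vec c x' p) (Sum.inl j)
        = ∑ p : {p : M × J // 0 < x' p.1 p.2}, (if (p : M × J).2 = j then g p else 0) := by
      rw [Finset.sum_apply]
      refine Finset.sum_congr rfl fun p _ => ?_
      rcases eq_or_ne ((p : M × J).2) j with h | h
      · simp [vec, h]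
      · simp [vec, h, Ne.symm h]
    have h2 : ∑ p : {p : M × J // 0 < x' p.1 p.2}, (if (p : M × J).2 = j then g p else 0)
        = ∑ q ∈ (univ.filter (fun q : M × J => 0 < x' q.1 q.2)),
            (if q.2 = j then d q.1 q.2 else 0) := by
      rw [Finset.sum_subtype (p := fun q : M × J => 0 < x' q.1 q.2)
        (univ.filter (fun q : M × J => 0 < x' q.1 q.2)) (by intro q; simp)
        (fun q => if q.2 = j then d q.1 q.2 else 0)]
      refine Finset.sum_congr rfl fun p _ => ?_
      simp [hd, p.2]
    have h3 : ∑ q ∈ (univ.filter (fun q : M × J => 0 < x' q.1 q.2)),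
            (if q.2 = j then d q.1 q.2 else 0)
        = ∑ q : M × J, (if q.2 = j then d q.1 q.2 else 0) := by
      refine Finset.sum_subset (Finset.subset_univ _) ?_
      intro q _ hq
      simp only [mem_filter, mem_univ, true_and] at hq
      simp [hd0 q.1 q.2 hq]
    have h4 : ∑ q : M × J, (if q.2 = j then d q.1 q.2 else 0) = ∑ i, d i j := by
      rw [Fintype.sum_prod_type]
      refine Finset.sum_congr rfl fun i _ => ?_
      simp
    have := hsum (Sum.inl j)
    rw [h1, h2, h3, h4] at this
    exact this
  have hrow : ∀ i, ∑ j, c i j * d i j = 0 := by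
    intro i
    have h1 : (∑ p, g p • vec c x' p) (Sum.inr i)
        = ∑ p : {p : M × J // 0 < x' p.1 p.2},
            (if (p : M × J).1 = i then c (p : M × J).1 (p : M × J).2 * g p else 0) := by
      rw [Finset.sum_apply]
      refine Finset.sum_congr rfl fun p _ => ?_
      rcases eq_or_ne ((p : M × J).1) i with h | h
      · simp [vec, h, mul_comm]
      · simp [vec, h, Ne.symm h]
    have h2 : ∑ p : {p : M × J // 0 < x' p.1 p.2},
            (if (p : M × J).1 = i then c (p : M × J).1 (p : M × J).2 * g p else 0)
        = ∑ q ∈ (univ.filter (fun q : M × J => 0 < x' q.1 q.2)),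
            (if q.1 = i then c q.1 q.2 * d q.1 q.2 else 0) := by
      rw [Finset.sum_subtype (p := fun q : M × J => 0 < x' q.1 q.2)
        (univ.filter (fun q : M × J => 0 < x' q.1 q.2)) (by intro q; simp)
        (fun q => if q.1 = i then c q.1 q.2 * d q.1 q.2 else 0)]
      refine Finset.sum_congr rfl fun p _ => ?_
      simp [hd, p.2]
    have h3 : ∑ q ∈ (univ.filter (fun q : M × J => 0 < x' q.1 q.2)),
            (if q.1 = i then c q.1 q.2 * d q.1 q.2 else 0)
        = ∑ q : M × J, (if q.1 = i then c q.1 q.2 * d q.1 q.2 else 0) := by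
      refine Finset.sum_subset (Finset.subset_univ _) ?_
      intro q _ hq
      simp only [mem_filter, mem_univ, true_and] at hq
      simp [hd0 q.1 q.2 hq]
    have h4 : ∑ q : M × J, (if q.1 = i then c q.1 q.2 * d q.1 q.2 else 0)
        = ∑ j, c i j * d i j := by
      rw [Fintype.sum_prod_type_right]
      refine Finset.sum_congr rfl fun j _ => ?_
      simp
    have := hsum (Sum.inr i)
    rw [h1, h2, h3, h4] at this
    exact this
  -- perturbation argument
  set S := univ.filter (fun q : M × J => 0 < x' q.1 q.2) with hSdef
  have hS : S.Nonempty := ⟨p0.val, by simp [hSdef, p0.2]⟩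
  set ε := S.inf' hS (fun q => x' q.1 q.2 / (|d q.1 q.2| + 1)) with hε
  have hεpos : 0 < ε := by
    rw [hε, Finset.lt_inf'_iff]
    intro q hq
    simp only [hSdef, mem_filter, mem_univ, true_and] at hq
    positivity
  have hbound : ∀ i j, ε * |d i j| ≤ x' i j := by
    intro i j
    by_cases h : 0 < x' i j
    · have hmem : (i, j) ∈ S := by simp [hSdef, h]
      have h1 : ε ≤ x' i j / (|d i j| + 1) := Finset.inf'_le _ hmem
      have habs : (0:ℝ) ≤ |d i j| := abs_nonneg _
      calc ε * |d i j| ≤ (x' i j / (|d i j| + 1)) * |d i j| :=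
            mul_le_mul_of_nonneg_right h1 habs
        _ ≤ x' i j := by
            rw [div_mul_eq_mul_div, div_le_iff₀ (by linarith)]
            nlinarith [h.le]
    · rw [hd0 i j h]
      simpa using hfeas.2.2 i j
  set y : M → J → ℝ := fun i j => x' i j + ε * d i j with hy
  set z : M → J → ℝ := fun i j => x' i j - ε * d i j with hz
  have hysum : ∀ j, ∑ i, y i j = (∑ i, x' i j) + ε * ∑ i, d i j := by
    intro j; rw [Finset.mul_sum, ← Finset.sum_add_distrib]
  have hzsum : ∀ j, ∑ i, z i j = (∑ i, x' i j) - ε * ∑ i, d i j := by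
    intro j; rw [Finset.mul_sum, ← Finset.sum_sub_distrib]
  have hyrow : ∀ i, ∑ j, c i j * y i j = (∑ j, c i j * x' i j) + ε * ∑ j, c i j * d i j := by
    intro i; rw [Finset.mul_sum, ← Finset.sum_add_distrib]
    exact Finset.sum_congr rfl fun j _ => by simp [hy]; ring
  have hzrow : ∀ i, ∑ j, c i j * z i j = (∑ j, c i j * x' i j) - ε * ∑ j, c i j * d i j := by
    intro i; rw [Finset.mul_sum, ← Finset.sum_sub_distrib]
    exact Finset.sum_congr rfl fun j _ => by simp [hz]; ring
  have hyfeas : (∀ j, 1 ≤ ∑ i, y i j) ∧ (∀ i, ∑ j, c i j * y i j ≤ C) ∧ ∀ i j, 0 ≤ y i j := by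
    refine ⟨fun j => ?_, fun i => ?_, fun i j => ?_⟩
    · rw [hysum, hcol, mul_zero, add_zero]; exact hfeas.1 j
    · rw [hyrow, hrow, mul_zero, add_zero]; exact hfeas.2.1 i
    · have h1 := hbound i j
      have h2 : ε * -(|d i j|) ≤ ε * d i j :=
        mul_le_mul_of_nonneg_left (neg_abs_le _) hεpos.le
      rw [mul_neg] at h2
      simp only [hy]; linarith
  have hzfeas : (∀ j, 1 ≤ ∑ i, z i j) ∧ (∀ i, ∑ j, c i j * z i j ≤ C) ∧ ∀ i j, 0 ≤ z i j := by
    refine ⟨fun j => ?_, fun i => ?_, fun i j => ?_⟩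
    · rw [hzsum, hcol, mul_zero, sub_zero]; exact hfeas.1 j
    · rw [hzrow, hrow, mul_zero, sub_zero]; exact hfeas.2.1 i
    · have h1 := hbound i j
      have h2 : ε * d i j ≤ ε * |d i j| :=
        mul_le_mul_of_nonneg_left (le_abs_self _) hεpos.le
      simp only [hz]; linarith
  have hyz := hext y z hyfeas hzfeas (fun i j => by simp only [hy, hz]; ring)
  have heq := congrFun (congrFun hyz p0.val.1) p0.val.2
  simp only [hy, hz] at heq
  have hdg : d p0.val.1 p0.val.2 = g p0 := dif_pos p0.2
  nlinarith [heq, hεpos, hdg]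

open Classical in
/-- Linear independence of support-edge columns implies the "Hall type" cardinality bound:
any set of support edges has at least as many incident vertices. -/
theorem card_le (c x' : M → J → ℝ) (hli : LinearIndependent ℝ (vec c x'))
    (s : Finset {p : M × J // 0 < x' p.1 p.2}) :
    s.card ≤ (s.biUnion (fun p =>
      ({Sum.inl (p : M × J).2, Sum.inr (p : M × J).1} : Finset (J ⊕ M)))).card := by
  classical
  set T := s.biUnion (fun p =>
      ({Sum.inl (p : M × J).2, Sum.inr (p : M × J).1} : Finset (J ⊕ M))) with hT
  set w : ↥s → (↥T → ℝ) := fun p u => vec c x' p.val u.val with hw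
  have hwli : LinearIndependent ℝ w := by
    rw [Fintype.linearIndependent_iff]
    intro g hg p
    set G : {p : M × J // 0 < x' p.1 p.2} → ℝ :=
      fun q => if h : q ∈ s then g ⟨q, h⟩ else 0 with hG
    have step1 : ∑ q, G q • vec c x' q = ∑ q ∈ s, G q • vec c x' q := by
      refine (Finset.sum_subset (Finset.subset_univ s) ?_).symm
      intro q _ hq; simp [hG, hq]
    have step2 : ∑ q ∈ s, G q • vec c x' q = ∑ p : ↥s, g p • vec c x' p.val := by
      rw [← Finset.sum_coe_sort s (fun q => G q • vec c x' q)]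
      refine Finset.sum_congr rfl fun p _ => ?_
      simp [hG, p.2]
    have hGsum : ∑ q, G q • vec c x' q = ∑ p : ↥s, g p • vec c x' p.val := step1.trans step2
    have hzero : ∑ q, G q • vec c x' q = 0 := by
      rw [hGsum]
      funext u
      by_cases hu : u ∈ T
      · have := congrFun hg ⟨u, hu⟩
        simpa [w, Finset.sum_apply] using this
      · simp only [Finset.sum_apply, Pi.zero_apply]
        refine Finset.sum_eq_zero fun p _ => ?_
        have h1 : u ≠ Sum.inl (p.val : M × J).2 := by
          rintro rfl; exact hu (Finset.mem_biUnion.mpr ⟨p, p.2, by simp⟩)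
        have h2 : u ≠ Sum.inr (p.val : M × J).1 := by
          rintro rfl; exact hu (Finset.mem_biUnion.mpr ⟨p, p.2, by simp⟩)
        have : vec c x' p.val u = 0 := by
          cases u with
          | inl j => simp only [vec, Sum.elim_inl]; rw [if_neg]; intro h; exact h1 (by rw [h])
          | inr i => simp only [vec, Sum.elim_inr]; rw [if_neg]; intro h; exact h2 (by rw [h])
        simp [this]
    have := Fintype.linearIndependent_iff.mp hli G hzero p.val
    simpa [hG, p.2] using this
  have h1 : Fintype.card ↥s ≤ Module.finrank ℝ (↥T → ℝ) :=
    hwli.fintype_card_le_finrank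
  rwa [Module.finrank_fintype_fun_eq_card, Fintype.card_coe, Fintype.card_coe] at h1

end Stmt16Aux

open Classical in
/-- The support graph of an extreme point of the assignment LP is a pseudoforest
(each connected component has at most as many support edges as vertices) and hence
admits an orientation in which every node has in-degree at most 1. -/
theorem stmt16 {J M : Type*} [Fintype J] [Fintype M]
    (c : M → J → ℝ) (hc : ∀ i j, 0 < c i j) (C : ℝ) (hC : 0 < C)
    (x' : M → J → ℝ)
    (hfeas : (∀ j, 1 ≤ ∑ i, x' i j) ∧ (∀ i, ∑ j, c i j * x' i j ≤ C) ∧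
      ∀ i j, 0 ≤ x' i j)
    (hext : ∀ y z : M → J → ℝ,
      ((∀ j, 1 ≤ ∑ i, y i j) ∧ (∀ i, ∑ j, c i j * y i j ≤ C) ∧ ∀ i j, 0 ≤ y i j) →
      ((∀ j, 1 ≤ ∑ i, z i j) ∧ (∀ i, ∑ j, c i j * z i j ≤ C) ∧ ∀ i j, 0 ≤ z i j) →
      (∀ i j, x' i j = (y i j + z i j) / 2) → y = z) :
    (∀ v : J ⊕ M,
      (Finset.univ.filter (fun p : M × J => 0 < x' p.1 p.2 ∧
        Relation.ReflTransGen (fun a b : J ⊕ M =>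
          (∃ j i, a = Sum.inl j ∧ b = Sum.inr i ∧ 0 < x' i j) ∨
          (∃ j i, a = Sum.inr i ∧ b = Sum.inl j ∧ 0 < x' i j))
          (Sum.inr p.1) v)).card ≤
      (Finset.univ.filter (fun u : J ⊕ M =>
        Relation.ReflTransGen (fun a b : J ⊕ M =>
          (∃ j i, a = Sum.inl j ∧ b = Sum.inr i ∧ 0 < x' i j) ∨
          (∃ j i, a = Sum.inr i ∧ b = Sum.inl j ∧ 0 < x' i j)) u v)).card) ∧
    ∃ o : M → J → Bool,
      (∀ j : J, (Finset.univ.filter (fun i : M => 0 < x' i j ∧ o i j = true)).card ≤ 1) ∧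
      (∀ i : M, (Finset.univ.filter (fun j : J => 0 < x' i j ∧ o i j = false)).card ≤ 1) := by
  classical
  set R : J ⊕ M → J ⊕ M → Prop := fun a b =>
    (∃ j i, a = Sum.inl j ∧ b = Sum.inr i ∧ 0 < x' i j) ∨
    (∃ j i, a = Sum.inr i ∧ b = Sum.inl j ∧ 0 < x' i j) with hR
  have hli := Stmt16Aux.key c C x' hfeas hext
  have hcard := Stmt16Aux.card_le c x' hli
  constructor
  · -- pseudoforest bound
    intro v
    set s : Finset {p : M × J // 0 < x' p.1 p.2} :=
      Finset.univ.filter (fun p => Relation.ReflTransGen R (Sum.inr (p : M × J).1) v) with hs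
    have himg : Finset.univ.filter (fun p : M × J => 0 < x' p.1 p.2 ∧
        Relation.ReflTransGen R (Sum.inr p.1) v) = s.image Subtype.val := by
      ext q
      simp only [Finset.mem_filter, Finset.mem_univ, true_and, Finset.mem_image, hs]
      constructor
      · rintro ⟨h1, h2⟩; exact ⟨⟨q, h1⟩, h2, rfl⟩
      · rintro ⟨p, hp, rfl⟩; exact ⟨p.2, hp⟩
    rw [himg, Finset.card_image_of_injective _ Subtype.val_injective]
    refine (hcard s).trans (Finset.card_le_card ?_)
    intro u hu
    rw [Finset.mem_biUnion] at hu
    obtain ⟨p, hp, hu⟩ := hu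
    rw [hs, Finset.mem_filter] at hp
    refine Finset.mem_filter.mpr ⟨Finset.mem_univ u, ?_⟩
    rcases Finset.mem_insert.mp hu with h | h
    · subst h
      refine Relation.ReflTransGen.head ?_ hp.2
      exact Or.inl ⟨(p : M × J).2, (p : M × J).1, rfl, rfl, p.2⟩
    · rw [Finset.mem_singleton] at h; subst h; exact hp.2
  · -- orientation via Hall's theorem
    obtain ⟨f, hfinj, hfmem⟩ := (Finset.all_card_le_biUnion_card_iff_exists_injective
      (fun p : {p : M × J // 0 < x' p.1 p.2} =>
        ({Sum.inl (p : M × J).2, Sum.inr (p : M × J).1} : Finset (J ⊕ M)))).mp (hcard)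
    refine ⟨fun i j => if h : 0 < x' i j then decide (f ⟨(i,j), h⟩ = Sum.inl j) else true,
      fun j => ?_, fun i => ?_⟩
    · rw [Finset.card_le_one]
      intro i1 h1 i2 h2
      rw [Finset.mem_filter] at h1 h2
      have hx1 := h1.2.1; have ho1 := h1.2.2
      have hx2 := h2.2.1; have ho2 := h2.2.2
      simp only [dif_pos hx1] at ho1
      simp only [dif_pos hx2] at ho2
      have e1 : f ⟨(i1, j), hx1⟩ = Sum.inl j := of_decide_eq_true ho1
      have e2 : f ⟨(i2, j), hx2⟩ = Sum.inl j := of_decide_eq_true ho2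
      have h := hfinj (e1.trans e2.symm)
      rw [Subtype.mk.injEq, Prod.mk.injEq] at h
      exact h.1
    · rw [Finset.card_le_one]
      intro j1 h1 j2 h2
      rw [Finset.mem_filter] at h1 h2
      have hx1 := h1.2.1; have ho1 := h1.2.2
      have hx2 := h2.2.1; have ho2 := h2.2.2
      simp only [dif_pos hx1] at ho1
      simp only [dif_pos hx2] at ho2
      have e1 : f ⟨(i, j1), hx1⟩ ≠ Sum.inl j1 := by
        intro h; rw [h] at ho1; simp at ho1
      have e2 : f ⟨(i, j2), hx2⟩ ≠ Sum.inl j2 := by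
        intro h; rw [h] at ho2; simp at ho2
      have m1 := hfmem ⟨(i, j1), hx1⟩
      have m2 := hfmem ⟨(i, j2), hx2⟩
      simp only [Finset.mem_insert, Finset.mem_singleton] at m1 m2
      have e1' : f ⟨(i, j1), hx1⟩ = Sum.inr i := m1.resolve_left e1
      have e2' : f ⟨(i, j2), hx2⟩ = Sum.inr i := m2.resolve_left e2
      have h := hfinj (e1'.trans e2'.symm)
      rw [Subtype.mk.injEq, Prod.mk.injEq] at h
      exact h.2
end

section
/- A finite undirected graph G = (V, E) admits an orientation in which every vertex has in-degree at most 1 if and only if every connected component of G contains at most one cycle (i.e., each component has at most as many edges as vertices). -/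
/-!
An orientation with all in-degrees at most one is the same as an injective choice of an endpoint
for every edge, so by Hall's theorem it exists iff every vertex set `W` spans at most `#W` edges.
Components are such vertex sets, which gives one direction. Conversely, let `W` be nonempty inside
the component `C` and fix `w ∈ W`. Sending each `u ∈ C \ W` to the edge from `u` to a neighbour
strictly closer to `w` is injective (the two ends of an edge cannot both be closer than each
other) and lands in the edges of `C` not spanned by `W`, so `#C - #W ≤ #E(C) - #E(W)`, and
`#E(C) ≤ #C` yields `#E(W) ≤ #W`. An arbitrary `W` splits along the components.
-/

open Finset

namespace SimpleGraph

variable {V : Type*}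

theorem Reachable.exists_adj_dist_lt {G : SimpleGraph V} {u w : V} (hr : G.Reachable u w)
    (hne : u ≠ w) : ∃ x, G.Adj u x ∧ G.dist x w < G.dist u w := by
  obtain ⟨p, hp⟩ := hr.exists_walk_length_eq_dist
  cases p with
  | nil => exact absurd rfl hne
  | @cons _ x _ hadj q =>
    refine ⟨x, hadj, ?_⟩
    have := G.dist_le q
    rw [Walk.length_cons] at hp
    omega

variable [Fintype V] [DecidableEq V] (G : SimpleGraph V) [DecidableRel G.Adj]

theorem card_edgeFinset_inter_sym2_le_of_orientation {d : Sym2 V → V}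
    (hd : ∀ e ∈ G.edgeFinset, d e ∈ e) (hin : ∀ v, #{e ∈ G.edgeFinset | d e = v} ≤ 1)
    (W : Finset V) : #(G.edgeFinset ∩ W.sym2) ≤ #W := by
  refine card_le_card_of_injOn d (fun e he => ?_) (fun e₁ he₁ e₂ he₂ heq => ?_)
  · rw [coe_inter, Set.mem_inter_iff, mem_coe, mem_coe, mem_sym2_iff] at he
    exact he.2 _ (hd e he.1)
  · have hmem : ∀ e ∈ (G.edgeFinset ∩ W.sym2 : Finset _), d e = d e₁ →
        e ∈ ({e ∈ G.edgeFinset | d e = d e₁} : Finset _) :=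
      fun e he h => mem_filter.2 ⟨(mem_inter.1 he).1, h⟩
    exact card_le_one.1 (hin (d e₁)) _ (hmem e₁ he₁ rfl) _ (hmem e₂ he₂ heq.symm)

theorem exists_orientation_of_forall_card_le
    (h : ∀ W : Finset V, #(G.edgeFinset ∩ W.sym2) ≤ #W) :
    ∃ d : Sym2 V → V, (∀ e ∈ G.edgeFinset, d e ∈ e) ∧
      ∀ v, #{e ∈ G.edgeFinset | d e = v} ≤ 1 := by
  let ends : G.edgeFinset → Finset V := fun e => {u | u ∈ e.1}
  have hall : ∀ s : Finset G.edgeFinset, #s ≤ #(s.biUnion ends) := by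
    intro s
    calc #s = #(s.map (Function.Embedding.subtype _)) := (card_map _).symm
      _ ≤ #(G.edgeFinset ∩ (s.biUnion ends).sym2) := by
        refine card_le_card fun e he => ?_
        obtain ⟨e, hs, rfl⟩ := mem_map.1 he
        refine mem_inter.2 ⟨e.2, mem_sym2_iff.2 fun u hu => mem_biUnion.2 ⟨e, hs, ?_⟩⟩
        simpa [ends] using hu
      _ ≤ #(s.biUnion ends) := h _
  obtain ⟨f, hf, hfe⟩ := (all_card_le_biUnion_card_iff_exists_injective ends).1 hall
  refine ⟨fun e => if he : e ∈ G.edgeFinset then f ⟨e, he⟩ else e.out.1, fun e he => ?_,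
    fun v => card_le_one.2 fun a ha b hb => ?_⟩
  · dsimp only
    rw [dif_pos he]
    simpa [ends] using hfe ⟨e, he⟩
  · rw [mem_filter] at ha hb
    have hab := ha.2.trans hb.2.symm
    dsimp only at hab
    rw [dif_pos ha.1, dif_pos hb.1] at hab
    exact congrArg Subtype.val (hf hab)

theorem card_sdiff_le_card_edgeFinset_sdiff {v : V} {W : Finset V} (hW : W.Nonempty)
    (hWv : ∀ w ∈ W, G.Reachable w v) :
    #(({u | G.Reachable u v} : Finset V) \ W) ≤
      #((G.edgeFinset ∩ ({u | G.Reachable u v} : Finset V).sym2) \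
        (G.edgeFinset ∩ W.sym2)) := by
  obtain ⟨w, hw⟩ := hW
  set C : Finset V := {u | G.Reachable u v}
  have hC : ∀ {u}, u ∈ C ↔ G.Reachable u v := by simp [C]
  have hcloser : ∀ u ∈ C \ W, ∃ x, G.Adj u x ∧ G.dist x w < G.dist u w := by
    intro u hu
    rw [mem_sdiff, hC] at hu
    exact (hu.1.trans (hWv w hw).symm).exists_adj_dist_lt (ne_of_mem_of_not_mem hw hu.2).symm
  choose! next hadj hlt using hcloser
  refine card_le_card_of_injOn (fun u => s(u, next u)) (fun u hu => ?_)
    (fun u₁ hu₁ u₂ hu₂ heq => ?_)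
  · have hu' := mem_sdiff.1 hu
    simp only [coe_sdiff, coe_inter, Set.mem_sdiff, Set.mem_inter_iff, mem_coe, mem_edgeFinset,
      mem_edgeSet, mem_sym2_iff, Sym2.mem_iff, forall_eq_or_imp, forall_eq]
    refine ⟨⟨hadj u hu, hu'.1, hC.2 ?_⟩, fun h => hu'.2 h.2.1⟩
    exact (hadj u hu).symm.reachable.trans (hC.1 hu'.1)
  · rcases Sym2.eq_iff.1 heq with ⟨h, -⟩ | ⟨h₁, h₂⟩
    · exact h
    · have h₁' := hlt u₁ hu₁
      rw [h₂, h₁] at h₁'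
      exact (lt_asymm h₁' (hlt u₂ hu₂)).elim

theorem card_edgeFinset_inter_sym2_le_of_reachable {v : V} {W : Finset V} (hW : W.Nonempty)
    (hWv : ∀ w ∈ W, G.Reachable w v)
    (hv : #(G.edgeFinset ∩ ({u | G.Reachable u v} : Finset V).sym2) ≤
      #({u | G.Reachable u v} : Finset V)) :
    #(G.edgeFinset ∩ W.sym2) ≤ #W := by
  have hsub : W ⊆ ({u | G.Reachable u v} : Finset V) := fun w hw => by simpa using hWv w hw
  have key := G.card_sdiff_le_card_edgeFinset_sdiff hW hWv
  have hEsub := inter_subset_inter_left (s := G.edgeFinset) (sym2_mono hsub)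
  rw [card_sdiff_of_subset hsub, card_sdiff_of_subset hEsub] at key
  have := card_le_card hsub
  have := card_le_card hEsub
  omega

theorem card_edgeFinset_inter_sym2_le
    (h : ∀ v, #(G.edgeFinset ∩ ({u | G.Reachable u v} : Finset V).sym2) ≤
      #({u | G.Reachable u v} : Finset V))
    (W : Finset V) : #(G.edgeFinset ∩ W.sym2) ≤ #W := by
  classical
  let part : G.ConnectedComponent → Finset V := fun c => {u ∈ W | G.connectedComponentMk u = c}
  calc #(G.edgeFinset ∩ W.sym2)
      ≤ #((W.image G.connectedComponentMk).biUnion fun c => G.edgeFinset ∩ (part c).sym2) := by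
        refine card_le_card fun e he => ?_
        induction e using Sym2.ind with
        | _ a b =>
          simp only [mem_inter, mem_edgeFinset, mem_edgeSet, mem_sym2_iff, Sym2.mem_iff,
            forall_eq_or_imp, forall_eq] at he
          refine mem_biUnion.2 ⟨_, mem_image_of_mem _ he.2.1, ?_⟩
          simp only [mem_inter, mem_edgeFinset, mem_edgeSet, mem_sym2_iff, Sym2.mem_iff,
            forall_eq_or_imp, forall_eq, part, mem_filter]
          exact ⟨he.1, ⟨he.2.1, trivial⟩, he.2.2,
            (ConnectedComponent.connectedComponentMk_eq_of_adj he.1).symm⟩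
    _ ≤ ∑ c ∈ W.image G.connectedComponentMk, #(G.edgeFinset ∩ (part c).sym2) :=
        card_biUnion_le
    _ ≤ ∑ c ∈ W.image G.connectedComponentMk, #(part c) := by
        refine sum_le_sum fun c hc => ?_
        obtain ⟨v, hv, rfl⟩ := mem_image.1 hc
        exact G.card_edgeFinset_inter_sym2_le_of_reachable ⟨v, mem_filter.2 ⟨hv, rfl⟩⟩
          (fun u hu => ConnectedComponent.eq.1 (mem_filter.1 hu).2) (h v)
    _ = #W := (card_eq_sum_card_image _ _).symm

end SimpleGraph

open Classical in
/-- A finite graph admits an orientation with all in-degrees at most 1 iff it is a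
pseudoforest, i.e., every connected component has at most as many edges as vertices. -/
theorem stmt17 {V : Type*} [Fintype V] [DecidableEq V]
    (G : SimpleGraph V) [DecidableRel G.Adj] :
    (∃ d : Sym2 V → V,
      (∀ e ∈ G.edgeFinset, d e ∈ e) ∧
      (∀ v : V, (G.edgeFinset.filter (fun e => d e = v)).card ≤ 1)) ↔
    (∀ v : V,
      (G.edgeFinset.filter (fun e => ∀ u ∈ e, G.Reachable u v)).card ≤
        (Finset.univ.filter (fun u : V => G.Reachable u v)).card) := by
  have hcomponent : ∀ v, G.edgeFinset.filter (fun e => ∀ u ∈ e, G.Reachable u v) =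
      G.edgeFinset ∩ (Finset.univ.filter (fun u : V => G.Reachable u v)).sym2 := by
    intro v
    ext e
    simp [mem_sym2_iff]
  simp only [hcomponent]
  constructor
  · rintro ⟨d, hd, hin⟩ v
    exact G.card_edgeFinset_inter_sym2_le_of_orientation hd hin _
  · exact fun h => G.exists_orientation_of_forall_card_le (G.card_edgeFinset_inter_sym2_le h)
end
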